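/- arXiv:2003.11307 — 3 statements merged into one kernel-verified Lean document; each statement's English description precedes it below -/
import Mathlib

section
/- Let S = {x_1,…,x_K} ⊆ ℝ^d be a finite set and Π = conv(S) its convex hull. For each δ ∈ Δ let g(·,δ) : ℝ^d → ℝ be affine. Then there exists a point x̂ ∈ S such that sup_{x ∈ Π} V(x) ≤ (d+1)·V(x̂); namely x̂ may be taken as a point of S maximizing V over S, so that sup_{x ∈ Π} V(x) ≤ (d+1)·max_{j=1,…,K} V(x_j). -/
open MeasureTheory

/-- **Lemma 1 of the paper.**
Let `S = {x_1, …, x_K} ⊆ ℝ^d` be a finite (nonempty) set and `Π = conv(S)`.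
For each `δ ∈ Δ` let `g(·,δ) : ℝ^d → ℝ` be affine, and let
`V(y) = ℙ{δ : g(y,δ) > 0}`.  Then there exists `x̂ ∈ S` (which may be taken to
maximize `V` over `S`) such that `sup_{x ∈ Π} V(x) ≤ (d+1) · V(x̂)`. -/
theorem set_violation_le_vertex_violation {d : ℕ} {Δ : Type*}
    [MeasurableSpace Δ] (P : Measure Δ) [IsProbabilityMeasure P]
    (g : Δ → ((Fin d → ℝ) →ᵃ[ℝ] ℝ))
    (S : Finset (Fin d → ℝ)) (hS : S.Nonempty)
    (V : (Fin d → ℝ) → ℝ)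
    (hV : ∀ y, V y = (P {δ : Δ | g δ y > 0}).toReal)
    (hmeas : ∀ y : Fin d → ℝ, MeasurableSet {δ : Δ | g δ y > 0}) :
    ∃ xhat ∈ S, (∀ s ∈ S, V s ≤ V xhat) ∧
      (⨆ x ∈ convexHull ℝ (S : Set (Fin d → ℝ)), V x) ≤ (d + 1) * V xhat := by
  obtain ⟨xhat, hxS, hmax⟩ := S.exists_max_image V hS
  refine ⟨xhat, hxS, hmax, ?_⟩
  have hVnn : ∀ y, 0 ≤ V y := fun y => (hV y) ▸ ENNReal.toReal_nonneg
  have hC : 0 ≤ (d + 1 : ℝ) * V xhat :=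
    mul_nonneg (by positivity) (hVnn xhat)
  -- main pointwise bound
  have key : ∀ x ∈ convexHull ℝ (S : Set (Fin d → ℝ)), V x ≤ (d + 1) * V xhat := by
    intro x hx
    rw [convexHull_eq_union] at hx
    simp only [Set.mem_iUnion] at hx
    obtain ⟨t, hts, hai, hxt⟩ := hx
    -- cardinality bound via affine independence
    have hcard : t.card ≤ d + 1 := by
      have h1 := hai.card_le_finrank_succ
      rw [Fintype.card_coe] at h1
      refine h1.trans ?_
      have h2 : Module.finrank ℝ (vectorSpan ℝ (Set.range ((↑) : t → (Fin d → ℝ))))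
          ≤ Module.finrank ℝ (Fin d → ℝ) := Submodule.finrank_le _
      have h3 : Module.finrank ℝ (Fin d → ℝ) = d := by simp
      omega
    -- inclusion of violation sets
    have hincl : {δ : Δ | g δ x > 0} ⊆ ⋃ s ∈ t, {δ : Δ | g δ s > 0} := by
      intro δ hδ
      by_contra hcon
      simp only [Set.mem_iUnion, not_exists, Set.mem_setOf_eq, not_lt] at hcon
      have hconv : (t : Set (Fin d → ℝ)) ⊆ {y | g δ y ≤ 0} := fun s hs => hcon s hs
      have : x ∈ {y : Fin d → ℝ | g δ y ≤ 0} := by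
        refine convexHull_min hconv ?_ hxt
        exact (convex_Iic (0 : ℝ)).affine_preimage (g δ)
      exact absurd hδ (by simpa using not_lt.mpr this)
    -- measure bound
    have hmeasle : P {δ : Δ | g δ x > 0} ≤ ∑ s ∈ t, P {δ : Δ | g δ s > 0} :=
      le_trans (measure_mono hincl) (measure_biUnion_finset_le t _)
    have hfin : ∀ s : Fin d → ℝ, P {δ : Δ | g δ s > 0} ≠ ⊤ := fun s => measure_ne_top P _
    have hsum : (∑ s ∈ t, P {δ : Δ | g δ s > 0}) ≠ ⊤ :=
      ENNReal.sum_ne_top.mpr fun s _ => hfin s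
    have h4 : V x ≤ ∑ s ∈ t, V s := by
      rw [hV]
      calc (P {δ : Δ | g δ x > 0}).toReal
          ≤ (∑ s ∈ t, P {δ : Δ | g δ s > 0}).toReal :=
            ENNReal.toReal_mono hsum hmeasle
        _ = ∑ s ∈ t, (P {δ : Δ | g δ s > 0}).toReal := ENNReal.toReal_sum fun s _ => hfin s
        _ = ∑ s ∈ t, V s := by simp [hV]
    have h5 : (∑ s ∈ t, V s) ≤ ∑ _s ∈ t, V xhat :=
      Finset.sum_le_sum fun s hs => hmax s (hts hs)
    have h6 : (∑ _s ∈ t, V xhat) = t.card * V xhat := by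
      rw [Finset.sum_const, nsmul_eq_mul]
    calc V x ≤ ∑ s ∈ t, V s := h4
      _ ≤ (t.card : ℝ) * V xhat := by rw [← h6]; exact h5
      _ ≤ (d + 1) * V xhat := by
          apply mul_le_mul_of_nonneg_right _ (hVnn xhat)
          exact_mod_cast hcard
  refine Real.iSup_le (fun x => Real.iSup_le (fun hx => key x hx) hC) hC
end

section
/- Let S ⊆ ℝ^d be a finite set, let x ∈ conv(S), and for each δ ∈ Δ let g(·,δ) : ℝ^d → ℝ be affine. Then there exists a subset T ⊆ S with |T| ≤ d+1 such that { δ ∈ Δ : g(x,δ) > 0 } ⊆ ⋃_{s ∈ T} { δ ∈ Δ : g(s,δ) > 0 }. -/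
/-- **Carathéodory set-inclusion step.**
Let `S ⊆ ℝ^d` be a finite set, `x ∈ conv(S)`, and for each `δ ∈ Δ` let
`g(·,δ) : ℝ^d → ℝ` be affine.  Then there is a subset `T ⊆ S` with
`|T| ≤ d + 1` such that `{δ : g(x,δ) > 0} ⊆ ⋃_{s ∈ T} {δ : g(s,δ) > 0}`. -/
theorem caratheodory_violation_inclusion {d : ℕ} {Δ : Type*}
    (g : Δ → ((Fin d → ℝ) →ᵃ[ℝ] ℝ))
    (S : Finset (Fin d → ℝ)) (x : Fin d → ℝ)
    (hx : x ∈ convexHull ℝ (S : Set (Fin d → ℝ))) :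
    ∃ T : Finset (Fin d → ℝ), T ⊆ S ∧ T.card ≤ d + 1 ∧
      {δ : Δ | g δ x > 0} ⊆ ⋃ s ∈ T, {δ : Δ | g δ s > 0} := by
  rw [convexHull_eq_union] at hx
  simp only [Set.mem_iUnion] at hx
  obtain ⟨T, hTS, hTind, hxT⟩ := hx
  refine ⟨T, by exact_mod_cast hTS, ?_, ?_⟩
  · have h1 := hTind.card_le_finrank_succ
    have h2 : Module.finrank ℝ ↥(vectorSpan ℝ (Set.range ((↑) : T → (Fin d → ℝ)))) ≤ d := by
      simpa [Module.finrank_fin_fun] using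
        (vectorSpan ℝ (Set.range ((↑) : T → (Fin d → ℝ)))).finrank_le
    rw [Fintype.card_coe] at h1
    omega
  · intro δ hδ
    simp only [Set.mem_iUnion, Set.mem_setOf_eq]
    by_contra h
    push_neg at h
    have hsub : (T : Set (Fin d → ℝ)) ⊆ (g δ) ⁻¹' Set.Iic 0 := by
      intro s hs
      exact h s hs
    have hconv : Convex ℝ ((g δ) ⁻¹' Set.Iic 0) :=
      (convex_Iic (0 : ℝ)).affine_preimage (g δ)
    have := convexHull_min hsub hconv hxT
    simp only [Set.mem_preimage, Set.mem_Iic] at this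
    exact absurd hδ (not_lt.mpr this)
end

section
/- Let S ⊆ ℝ^d be a finite set and let x ∈ conv(S). For each δ ∈ Δ let g(·,δ) : ℝ^d → ℝ be affine. Then V(x) ≤ (d+1)·max_{s ∈ S} V(s); that is, the probability of violation of any point of the convex hull of S is at most (d+1) times the largest probability of violation among the points of S. -/
open MeasureTheory

/-- **Pointwise Carathéodory violation bound.**
Let `S ⊆ ℝ^d` be a finite (nonempty) set and `x ∈ conv(S)`.  For each `δ ∈ Δ`
let `g(·,δ) : ℝ^d → ℝ` be affine, and let `V(y) = ℙ{δ : g(y,δ) > 0}` be the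
probability of violation.  Then `V(x) ≤ (d+1) · max_{s ∈ S} V(s)`. -/
theorem pointwise_caratheodory_violation_bound {d : ℕ} {Δ : Type*}
    [MeasurableSpace Δ] (P : Measure Δ) [IsProbabilityMeasure P]
    (g : Δ → ((Fin d → ℝ) →ᵃ[ℝ] ℝ))
    (S : Finset (Fin d → ℝ)) (hS : S.Nonempty)
    (x : Fin d → ℝ) (hx : x ∈ convexHull ℝ (S : Set (Fin d → ℝ)))
    (V : (Fin d → ℝ) → ℝ)
    (hV : ∀ y, V y = (P {δ : Δ | g δ y > 0}).toReal)
    (hmeas : ∀ y : Fin d → ℝ, MeasurableSet {δ : Δ | g δ y > 0}) :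
    V x ≤ (d + 1) * S.sup' hS V := by
  classical
  -- Carathéodory: x lies in the convex hull of an affinely independent subset t of S
  rw [convexHull_eq_union] at hx
  simp only [Set.mem_iUnion, exists_prop] at hx
  obtain ⟨t, htS, htind, hxt⟩ := hx
  -- cardinality bound
  have hcard : t.card ≤ d + 1 := by
    have h1 := htind.card_le_finrank_succ
    have h2 : Module.finrank ℝ
        (vectorSpan ℝ (Set.range (Subtype.val : t → (Fin d → ℝ)))) ≤ d := by
      have := Submodule.finrank_le (vectorSpan ℝ (Set.range (Subtype.val : t → (Fin d → ℝ))))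
      simpa [Module.finrank_fin_fun] using this
    rw [Fintype.card_coe] at h1
    omega
  -- t is nonempty since x ∈ convexHull t
  have htne : t.Nonempty := by
    by_contra h
    rw [Finset.not_nonempty_iff_eq_empty] at h
    simp [h] at hxt
  -- convex combination
  rw [Finset.convexHull_eq] at hxt
  obtain ⟨w, hw0, hw1, hwx⟩ := hxt
  -- inclusion of events
  have hsub : {δ : Δ | g δ x > 0} ⊆ ⋃ s ∈ t, {δ : Δ | g δ s > 0} := by
    intro δ hδ
    simp only [Set.mem_setOf_eq] at hδ
    by_contra h
    simp only [Set.mem_iUnion, Set.mem_setOf_eq, not_exists, not_lt] at h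
    have hx' : g δ x ≤ 0 := by
      have : x = t.affineCombination ℝ id w := by
        rw [affineCombination_eq_centerMass hw1, hwx]
      rw [this, Finset.map_affineCombination _ _ _ hw1,
        affineCombination_eq_centerMass hw1, Finset.centerMass,
        hw1, inv_one, one_smul]
      apply Finset.sum_nonpos
      intro s hs
      exact smul_nonpos_of_nonneg_of_nonpos (hw0 s hs) (h s hs)
    exact absurd hδ (not_lt.mpr hx')
  -- V is nonneg, and V s ≤ sup'
  set M := S.sup' hS V with hM
  have hM0 : 0 ≤ M := by
    obtain ⟨s, hs⟩ := hS
    have := Finset.le_sup' V hs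
    have h0 : 0 ≤ V s := by rw [hV]; positivity
    linarith
  have hVleM : ∀ s ∈ t, V s ≤ M := fun s hs => Finset.le_sup' V (htS hs)
  -- measure bound
  have hmeasure : P {δ : Δ | g δ x > 0} ≤ ∑ s ∈ t, P {δ : Δ | g δ s > 0} :=
    le_trans (measure_mono hsub) (measure_biUnion_finset_le t _)
  have hfin : ∀ y : Fin d → ℝ, P {δ : Δ | g δ y > 0} ≠ ⊤ :=
    fun y => (measure_lt_top P _).ne
  have hVx : V x ≤ ∑ s ∈ t, V s := by
    rw [hV]
    have : (P {δ : Δ | g δ x > 0}).toReal ≤ (∑ s ∈ t, P {δ : Δ | g δ s > 0}).toReal :=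
      ENNReal.toReal_mono (by simp [ENNReal.sum_ne_top, hfin]) hmeasure
    rw [ENNReal.toReal_sum (fun s _ => hfin s)] at this
    calc (P {δ : Δ | g δ x > 0}).toReal ≤ ∑ s ∈ t, (P {δ : Δ | g δ s > 0}).toReal := this
    _ = ∑ s ∈ t, V s := by simp [hV]
  calc V x ≤ ∑ s ∈ t, V s := hVx
    _ ≤ ∑ _s ∈ t, M := Finset.sum_le_sum hVleM
    _ = t.card * M := by simp [Finset.sum_const, nsmul_eq_mul]
    _ ≤ (d + 1) * M := by
        apply mul_le_mul_of_nonneg_right _ hM0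
        exact_mod_cast hcard
end
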